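/- For a lattice Γ in ℝ^d, the counting function g_Γ(m) of similar sublattices of index m is super-multiplicative: g_Γ(mn) ≥ g_Γ(m)·g_Γ(n) whenever gcd(m,n) = 1. -/

import Mathlib

/-!
If `Λ₁ = S Γ` has index `m` and `Λ₂` has index `n`, then `S Λ₂` is a similar sublattice of index
`m n`. The pair is recovered from `S Λ₂`: as `gcd(m, n) = 1`, `Λ₁` is the only subgroup of `Γ` of
index `m` containing `S Λ₂` with index `n` (for `x ∈ Λ₁`, both `m x` and `n x` lie in any such
subgroup), and `S` is injective. This gives an injection `SSL Γ m × SSL Γ n → SSL Γ (m n)`, and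
the target is finite because a subgroup of index `N` of `Γ ≅ ℤ^d` contains `N Γ`, hence is
determined by its image in the finite group `Γ / N Γ`. Finiteness matters since `Nat.card` of an
infinite set is `0`; the argument needs `m n ≠ 0`, and when `m n = 0` coprimality forces the other
index to be `1`, where `SSL Γ 1 ⊆ {Γ}`.
-/

open scoped RealInnerProductSpace

noncomputable section

/-- A non-zero linear similarity of ℝ^d: a linear map scaling all inner
products by a constant c > 0. -/
def IsSimilarity {d : ℕ} (S : EuclideanSpace ℝ (Fin d) →ₗ[ℝ] EuclideanSpace ℝ (Fin d)) : Prop :=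
  ∃ c : ℝ, 0 < c ∧ ∀ u v : EuclideanSpace ℝ (Fin d), (inner ℝ (S u) (S v) : ℝ) = c * inner ℝ u v

/-- A lattice in ℝ^d: a free ℤ-module of rank d whose ℝ-span is all of ℝ^d. -/
def IsLattice {d : ℕ} (Γ : AddSubgroup (EuclideanSpace ℝ (Fin d))) : Prop :=
  Nonempty (Module.Basis (Fin d) ℤ (AddSubgroup.toIntSubmodule Γ)) ∧
  Submodule.span ℝ (Γ : Set (EuclideanSpace ℝ (Fin d))) = ⊤

/-- The set of similar sublattices (SSLs) of Γ of index m: sublattices of Γ that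
are images of Γ under a (non-zero) linear similarity and have index m in Γ. -/
def SSL {d : ℕ} (Γ : AddSubgroup (EuclideanSpace ℝ (Fin d))) (m : ℕ) :
    Set (AddSubgroup (EuclideanSpace ℝ (Fin d))) :=
  {Λ | Λ ≤ Γ ∧ Λ.relIndex Γ = m ∧
    ∃ S : EuclideanSpace ℝ (Fin d) →ₗ[ℝ] EuclideanSpace ℝ (Fin d),
      IsSimilarity S ∧ S '' (Γ : Set (EuclideanSpace ℝ (Fin d))) = (Λ : Set (EuclideanSpace ℝ (Fin d)))}

namespace AddSubgroup

variable {G : Type*} [AddCommGroup G]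

theorem mem_of_nsmul_mem_of_coprime {H : AddSubgroup G} {x : G} {m n : ℕ} (hmn : m.Coprime n)
    (hm : m • x ∈ H) (hn : n • x ∈ H) : x ∈ H := by
  obtain ⟨u, v, huv⟩ := Nat.isCoprime_iff_coprime.mpr hmn
  have hx : x = u • (m • x) + v • (n • x) := by
    rw [← natCast_zsmul, ← natCast_zsmul, smul_smul, smul_smul, ← add_smul, huv, one_smul]
  rw [hx]
  exact H.add_mem (H.zsmul_mem hm u) (H.zsmul_mem hn v)

theorem le_of_relIndex_coprime {Λ A A' Γ : AddSubgroup G} {m n : ℕ} (hmn : m.Coprime n)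
    (hAΓ : A ≤ Γ) (hΛA' : Λ ≤ A') (hA' : A'.relIndex Γ = m) (hΛ : Λ.relIndex A = n) :
    A ≤ A' := fun _ hx ↦
  mem_of_nsmul_mem_of_coprime hmn (hA' ▸ A'.nsmul_relIndex_mem (hAΓ hx))
    (hΛA' (hΛ ▸ Λ.nsmul_relIndex_mem hx))

theorem finite_setOf_index_eq_of_pi_int {ι : Type*} [Finite ι] {N : ℕ} (hN : N ≠ 0) :
    {H : AddSubgroup (ι → ℤ) | H.index = N}.Finite := by
  let reduce : (ι → ℤ) →+ (ι → ZMod N) := (Int.castAddHom (ZMod N)).compLeft ι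
  have : NeZero N := ⟨hN⟩
  have ker_le : ∀ H : AddSubgroup (ι → ℤ), H.index = N → reduce.ker ≤ H := by
    intro H hH v hv
    have hdvd : ∀ i, (N : ℤ) ∣ v i := fun i ↦
      (ZMod.intCast_zmod_eq_zero_iff_dvd _ N).mp (congrFun hv i)
    have hv : v = N • fun i ↦ v i / N := funext fun i ↦ by
      simp [Int.mul_ediv_cancel' (hdvd i)]
    rw [hv, ← hH]
    exact H.nsmul_index_mem _
  refine Set.Finite.of_finite_image (f := map reduce) (Set.toFinite _) fun H hH K hK hHK ↦ ?_
  rw [← sup_eq_left.mpr (ker_le H hH), ← sup_eq_left.mpr (ker_le K hK), ← comap_map_eq,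
    ← comap_map_eq, hHK]

theorem finite_setOf_index_eq [Module.Finite ℤ G] {N : ℕ} (hN : N ≠ 0) :
    {H : AddSubgroup G | H.index = N}.Finite := by
  obtain ⟨k, f, hf⟩ := Module.Finite.exists_fin' ℤ G
  refine Set.Finite.of_finite_image (f := comap f.toAddMonoidHom)
    ((finite_setOf_index_eq_of_pi_int hN).subset ?_) (comap_injective hf).injOn
  rintro _ ⟨H, hH, rfl⟩
  exact (index_comap_of_surjective H hf).trans hH

theorem finite_setOf_relIndex_eq (Γ : AddSubgroup G) [Module.Finite ℤ Γ] {N : ℕ} (hN : N ≠ 0) :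
    {Λ : AddSubgroup G | Λ ≤ Γ ∧ Λ.relIndex Γ = N}.Finite := by
  refine ((finite_setOf_index_eq hN).image (map Γ.subtype)).subset ?_
  rintro Λ ⟨hΛΓ, hΛ⟩
  exact ⟨Λ.addSubgroupOf Γ, hΛ, by rw [addSubgroupOf_map_subtype, inf_eq_left.mpr hΛΓ]⟩

end AddSubgroup

namespace IsSimilarity

variable {d : ℕ} {S T : EuclideanSpace ℝ (Fin d) →ₗ[ℝ] EuclideanSpace ℝ (Fin d)}

theorem injective (hS : IsSimilarity S) : Function.Injective S := by
  obtain ⟨c, hc, hS⟩ := hS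
  refine (injective_iff_map_eq_zero S).mpr fun u hu ↦ ?_
  have h := hS u u
  rw [hu, inner_zero_left, eq_comm, mul_eq_zero] at h
  exact inner_self_eq_zero.mp (h.resolve_left hc.ne')

theorem comp (hS : IsSimilarity S) (hT : IsSimilarity T) : IsSimilarity (S ∘ₗ T) := by
  obtain ⟨c, hc, hS⟩ := hS
  obtain ⟨c', hc', hT⟩ := hT
  exact ⟨c * c', mul_pos hc hc', fun u v ↦ by simp only [LinearMap.comp_apply, hS, hT, mul_assoc]⟩

end IsSimilarity

section SSL

variable {d : ℕ} {Γ : AddSubgroup (EuclideanSpace ℝ (Fin d))}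

theorem IsLattice.finite_SSL (hΓ : IsLattice Γ) {N : ℕ} (hN : N ≠ 0) : (SSL Γ N).Finite := by
  have : Module.Finite ℤ Γ := .of_basis hΓ.1.some
  exact (AddSubgroup.finite_setOf_relIndex_eq Γ hN).subset fun _ hΛ ↦ ⟨hΛ.1, hΛ.2.1⟩

theorem card_SSL_one_le (Γ : AddSubgroup (EuclideanSpace ℝ (Fin d))) : Nat.card (SSL Γ 1) ≤ 1 := by
  have hsub : SSL Γ 1 ⊆ {Γ} := fun Λ hΛ ↦ le_antisymm hΛ.1 (AddSubgroup.relIndex_eq_one.mp hΛ.2.1)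
  simpa using Nat.card_mono (Set.finite_singleton Γ) hsub

theorem exists_similarity_map_eq_of_mem_SSL {Λ : AddSubgroup (EuclideanSpace ℝ (Fin d))} {m : ℕ}
    (hΛ : Λ ∈ SSL Γ m) : ∃ S : EuclideanSpace ℝ (Fin d) →ₗ[ℝ] EuclideanSpace ℝ (Fin d),
      IsSimilarity S ∧ Γ.map S.toAddMonoidHom = Λ := by
  obtain ⟨S, hS, hSΓ⟩ := hΛ.2.2
  exact ⟨S, hS, SetLike.coe_injective (by simpa using hSΓ)⟩

theorem map_mem_SSL {Λ₂ : AddSubgroup (EuclideanSpace ℝ (Fin d))} {m n : ℕ}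
    {S : EuclideanSpace ℝ (Fin d) →ₗ[ℝ] EuclideanSpace ℝ (Fin d)} (hS : IsSimilarity S)
    (h₁ : Γ.map S.toAddMonoidHom ∈ SSL Γ m) (h₂ : Λ₂ ∈ SSL Γ n) :
    Λ₂.map S.toAddMonoidHom ∈ SSL Γ (m * n) := by
  have hle : Λ₂.map S.toAddMonoidHom ≤ Γ.map S.toAddMonoidHom := AddSubgroup.map_mono h₂.1
  refine ⟨hle.trans h₁.1, ?_, ?_⟩
  · rw [← AddSubgroup.relIndex_mul_relIndex _ _ _ hle h₁.1,
      AddSubgroup.relIndex_map_map_of_injective _ _ hS.injective, h₂.2.1, h₁.2.1, mul_comm]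
  · obtain ⟨T, hT, hTΓ⟩ := exists_similarity_map_eq_of_mem_SSL h₂
    refine ⟨S ∘ₗ T, hS.comp hT, ?_⟩
    rw [← hTΓ, AddSubgroup.coe_map, AddSubgroup.coe_map, Set.image_image]
    rfl

theorem exists_injective_SSL_prod {m n : ℕ} (hmn : m.Coprime n) :
    ∃ F : SSL Γ m × SSL Γ n → SSL Γ (m * n), Function.Injective F := by
  choose S hS hSΓ using fun Λ : SSL Γ m ↦ exists_similarity_map_eq_of_mem_SSL Λ.2
  have hsub : ∀ (Λ₁ : SSL Γ m) (Λ₂ : SSL Γ n), Λ₂.1.map (S Λ₁).toAddMonoidHom ≤ Λ₁ ∧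
      (Λ₂.1.map (S Λ₁).toAddMonoidHom).relIndex Λ₁ = n := fun Λ₁ Λ₂ ↦ by
    rw [← hSΓ Λ₁, AddSubgroup.relIndex_map_map_of_injective _ _ (hS Λ₁).injective]
    exact ⟨AddSubgroup.map_mono Λ₂.2.1, Λ₂.2.2.1⟩
  refine ⟨fun p ↦ ⟨p.2.1.map (S p.1).toAddMonoidHom,
    map_mem_SSL (hS p.1) (hSΓ p.1 ▸ p.1.2) p.2.2⟩, ?_⟩
  rintro ⟨Λ₁, Λ₂⟩ ⟨Λ₁', Λ₂'⟩ h
  have hmap : Λ₂.1.map (S Λ₁).toAddMonoidHom = Λ₂'.1.map (S Λ₁').toAddMonoidHom :=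
    congrArg Subtype.val h
  obtain rfl : Λ₁ = Λ₁' := Subtype.ext <| le_antisymm
    (AddSubgroup.le_of_relIndex_coprime hmn Λ₁.2.1 (hmap ▸ (hsub Λ₁' Λ₂').1) Λ₁'.2.2.1
      (hsub Λ₁ Λ₂).2)
    (AddSubgroup.le_of_relIndex_coprime hmn Λ₁'.2.1 (hmap.symm ▸ (hsub Λ₁ Λ₂).1) Λ₁.2.2.1
      (hsub Λ₁' Λ₂').2)
  exact Prod.ext rfl (Subtype.ext (AddSubgroup.map_injective (hS Λ₁).injective hmap))

end SSL

/-- the counting function of similar sublattices of a lattice is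
super-multiplicative: g(mn) ≥ g(m)·g(n) for coprime m and n. -/
theorem SSL_supermultiplicative {d : ℕ}
    (Γ : AddSubgroup (EuclideanSpace ℝ (Fin d))) (hΓ : IsLattice Γ)
    (m n : ℕ) (hmn : Nat.Coprime m n) :
    Nat.card (SSL Γ m) * Nat.card (SSL Γ n) ≤ Nat.card (SSL Γ (m * n)) := by
  rcases Nat.eq_zero_or_pos (m * n) with hzero | hpos
  · rcases Nat.mul_eq_zero.mp hzero with rfl | rfl
    · rw [(Nat.coprime_zero_left n).mp hmn, mul_one]
      exact mul_le_of_le_one_right (Nat.zero_le _) (card_SSL_one_le Γ)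
    · rw [(Nat.coprime_zero_right m).mp hmn, one_mul]
      exact mul_le_of_le_one_left (Nat.zero_le _) (card_SSL_one_le Γ)
  have := (hΓ.finite_SSL hpos.ne').to_subtype
  obtain ⟨F, hF⟩ := exists_injective_SSL_prod hmn
  rw [← Nat.card_prod]
  exact Nat.card_le_card_of_injective F hF
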